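/- arXiv:2403.11718 — 4 statements merged into one kernel-verified Lean document; each statement's English description precedes it below -/
import Mathlib

section
/- Let α > −1 be a real number and N ≥ 1. For every z = (z_1,…,z_N) with 0 < z_1 < … < z_N one has ∫_{W_≥^{N,N}(z)} (∏_{k=1}^N y_k^α) Δ_N(y) dy = (∏_{k=1}^N z_k^{α+1}) Δ_N(z) / (α+1)_N. Consequently, Λ_{α,N}^N(z,·) is a probability measure on W_≥^N. -/
open MeasureTheory Real

noncomputable section

/-- The non-negative closed Weyl chamber `W_≥^N`. -/
def Wge (N : ℕ) : Set (Fin N → ℝ) :=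
  {x | (∀ i j : Fin N, i ≤ j → x i ≤ x j) ∧ ∀ i, 0 ≤ x i}

/-- The strictly positive open Weyl chamber `Ẇ_≥^N`. -/
def WgeOpen (N : ℕ) : Set (Fin N → ℝ) :=
  {x | (∀ i j : Fin N, i < j → x i < x j) ∧ ∀ i, 0 < x i}

/-- The Vandermonde determinant `Δ_N`. -/
def vdm {N : ℕ} (y : Fin N → ℝ) : ℝ :=
  ∏ p ∈ Finset.univ.filter fun p : Fin N × Fin N => p.1 < p.2, (y p.2 - y p.1)

/-- Pochhammer symbol `(a)_N = a (a+1) ⋯ (a+N-1)`. -/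
def poch (a : ℝ) (N : ℕ) : ℝ := ∏ k ∈ Finset.range N, (a + k)

/-- The interlacing set `W_≥^{N,N}(z) = {y : 0 ≤ y₁ ≤ z₁ ≤ y₂ ≤ … ≤ y_N ≤ z_N}`. -/
def interNN {N : ℕ} (z : Fin N → ℝ) : Set (Fin N → ℝ) :=
  {y | (∀ i, 0 ≤ y i) ∧ (∀ i, y i ≤ z i) ∧
    ∀ i : Fin N, ∀ h : (i : ℕ) + 1 < N, z i ≤ y ⟨(i : ℕ) + 1, h⟩}

/-- Density of the kernel `Λ_{α,N}^N(z, dy)` with respect to Lebesgue measure. -/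
def lamNNdens (α : ℝ) {N : ℕ} (z y : Fin N → ℝ) : ℝ :=
  poch (α + 1) N * (∏ k, y k ^ α / z k ^ (α + 1)) * (vdm y / vdm z) *
    Set.indicator (interNN z) (fun _ => (1 : ℝ)) y

/-- The `k`-th factor in the density of `Λ_{α,N}^{N+1}(x, dy)`
(with the conventions `x₀ = 0` and `y_{N+1} = +∞`). -/
def lamNp1factor (α : ℝ) {N : ℕ} (x : Fin (N + 1) → ℝ) (y : Fin N → ℝ) (i : Fin N) : ℝ :=
  Set.indicator
      (Set.Icc (if (i : ℕ) = 0 then 0 else x ⟨(i : ℕ) - 1, by have := i.isLt; omega⟩)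
        (x i.succ)) (fun _ => (1 : ℝ)) (y i) *
    ∫ z in Set.Ioc (max (x i.castSucc) (y i))
        (if h : (i : ℕ) + 1 < N then min (x i.succ) (y ⟨(i : ℕ) + 1, h⟩) else x i.succ),
      y i ^ α / z ^ (α + 1)

/-- Density of the kernel `Λ_{α,N}^{N+1}(x, dy)` with respect to Lebesgue measure. -/
def lamNp1dens (α : ℝ) {N : ℕ} (x : Fin (N + 1) → ℝ) (y : Fin N → ℝ) : ℝ :=
  (N.factorial : ℝ) * poch (α + 1) N * (vdm y / vdm x) * ∏ i, lamNp1factor α x y i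

/-- The interlacing set `W_N^{N+1}(x) = {z : x₁ ≤ z₁ ≤ x₂ ≤ … ≤ z_N ≤ x_{N+1}}`. -/
def interGT {N : ℕ} (x : Fin (N + 1) → ℝ) : Set (Fin N → ℝ) :=
  {z | ∀ i : Fin N, x i.castSucc ≤ z i ∧ z i ≤ x i.succ}

/-- Density of the kernel `Λ_N^{N+1}(x, dz)` with respect to Lebesgue measure. -/
def lamGTdens {N : ℕ} (x : Fin (N + 1) → ℝ) (z : Fin N → ℝ) : ℝ :=
  (N.factorial : ℝ) * (vdm z / vdm x) * Set.indicator (interGT x) (fun _ => (1 : ℝ)) z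



section Aux

lemma vdm_eq_det {N : ℕ} (y : Fin N → ℝ) : vdm y = (Matrix.vandermonde y).det := by
  rw [Matrix.det_vandermonde, Finset.prod_sigma', vdm]
  refine Finset.prod_nbij' (fun p => ⟨p.1, p.2⟩) (fun x => (x.1, x.2)) ?_ ?_ ?_ ?_ ?_ <;>
    simp [Finset.mem_sigma, Finset.mem_Ioi, Finset.mem_filter]

def lo {N : ℕ} (z : Fin N → ℝ) (i : Fin N) : ℝ :=
  if h : (i : ℕ) = 0 then 0 else z ⟨(i : ℕ) - 1, by have := i.isLt; omega⟩

lemma lo_nonneg {N : ℕ} {z : Fin N → ℝ} (hz : z ∈ WgeOpen N) (i : Fin N) : 0 ≤ lo z i := by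
  unfold lo; split
  · exact le_refl 0
  · exact (hz.2 _).le

lemma lo_le {N : ℕ} {z : Fin N → ℝ} (hz : z ∈ WgeOpen N) (i : Fin N) : lo z i ≤ z i := by
  unfold lo; split
  · exact (hz.2 i).le
  · refine (hz.1 _ i ?_).le
    rename_i h
    simp only [Fin.lt_def]
    omega

lemma interNN_eq_pi {N : ℕ} {z : Fin N → ℝ} (hz : z ∈ WgeOpen N) :
    interNN z = Set.univ.pi fun i => Set.Icc (lo z i) (z i) := by
  ext y
  simp only [interNN, Set.mem_setOf_eq, Set.mem_pi, Set.mem_univ, Set.mem_Icc, forall_const]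
  constructor
  · rintro ⟨h0, h1, h2⟩ i
    refine ⟨?_, h1 i⟩
    unfold lo; split
    · exact h0 i
    · rename_i h
      have hi := i.isLt
      have := h2 ⟨(i : ℕ) - 1, by omega⟩ (by simp; omega)
      exact le_of_le_of_eq this (congrArg y (Fin.ext (by show (i:ℕ) - 1 + 1 = (i:ℕ); omega)))
  · intro h
    refine ⟨fun i => le_trans (lo_nonneg hz i) (h i).1, fun i => (h i).2, ?_⟩
    intro i hi
    have := (h ⟨(i : ℕ) + 1, hi⟩).1
    refine le_trans ?_ this
    unfold lo
    split
    · simp_all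
    · refine le_of_eq (congrArg z (Fin.ext ?_))
      simp

lemma interNN_mono {N : ℕ} {z y : Fin N → ℝ} (hy : y ∈ interNN z) :
    ∀ i j : Fin N, i ≤ j → y i ≤ y j := by
  obtain ⟨h0, h1, h2⟩ := hy
  have key : ∀ k : ℕ, ∀ i : Fin N, ∀ h : (i : ℕ) + k < N, y i ≤ y ⟨(i : ℕ) + k, h⟩ := by
    intro k
    induction k with
    | zero => intro i h; exact le_of_eq (congrArg y (Fin.ext (by simp)))
    | succ k ih =>
      intro i h
      have hk : (i : ℕ) + k < N := by omega
      refine le_trans (ih i hk) (le_trans (h1 _) ?_)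
      have := h2 ⟨(i : ℕ) + k, hk⟩ (by simp; omega)
      exact le_of_le_of_eq this (congrArg y (Fin.ext (by show (i:ℕ) + k + 1 = (i:ℕ) + (k+1); omega)))
  intro i j hij
  have hij' : (i : ℕ) ≤ (j : ℕ) := hij
  have := key ((j : ℕ) - (i : ℕ)) i (by have := j.isLt; omega)
  convert this using 2
  exact Fin.ext (by simp; omega)

lemma interNN_subset_Wge {N : ℕ} (z : Fin N → ℝ) : interNN z ⊆ Wge N :=
  fun y hy => ⟨interNN_mono hy, hy.1⟩

lemma rpow_mul_pow {x : ℝ} (hx : 0 ≤ x) {α : ℝ} (hα : -1 < α) (n : ℕ) :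
    x ^ α * x ^ n = x ^ (α + n) := by
  rcases hx.eq_or_lt with h | h
  · subst h
    rcases Nat.eq_zero_or_pos n with hn | hn
    · subst hn; simp
    · have h1 : (1:ℝ) ≤ (n:ℝ) := by exact_mod_cast hn
      rw [zero_pow (by omega), mul_zero, Real.zero_rpow (by intro hc; linarith)]
  · rw [← Real.rpow_natCast x n, ← Real.rpow_add h]

lemma poch_pos {α : ℝ} (hα : -1 < α) (N : ℕ) : 0 < poch (α + 1) N :=
  Finset.prod_pos fun k _ => by have : (0:ℝ) ≤ (k:ℝ) := Nat.cast_nonneg k; linarith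

lemma vdm_pos {N : ℕ} {z : Fin N → ℝ} (hz : z ∈ WgeOpen N) : 0 < vdm z :=
  Finset.prod_pos fun p hp => sub_pos.2 (hz.1 _ _ (Finset.mem_filter.1 hp).2)

lemma vdm_nonneg_of_mono {N : ℕ} {y : Fin N → ℝ} (h : ∀ i j : Fin N, i ≤ j → y i ≤ y j) :
    0 ≤ vdm y :=
  Finset.prod_nonneg fun p hp => sub_nonneg.2 (h _ _ (le_of_lt (Finset.mem_filter.1 hp).2))

lemma indicator_univ_pi {N : ℕ} (s : Fin N → Set ℝ) (f : Fin N → ℝ → ℝ) (y : Fin N → ℝ) :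
    (Set.univ.pi s).indicator (fun y => ∏ i, f i (y i)) y = ∏ i, (s i).indicator (f i) (y i) := by
  by_cases h : y ∈ Set.univ.pi s
  · rw [Set.indicator_of_mem h]
    exact Finset.prod_congr rfl fun i _ => (Set.indicator_of_mem (h i trivial) _).symm
  · rw [Set.indicator_of_notMem h]
    obtain ⟨i, hi⟩ : ∃ i, y i ∉ s i := by simpa [Set.mem_pi] using h
    exact (Finset.prod_eq_zero (Finset.mem_univ i) (Set.indicator_of_notMem hi _)).symm

lemma det_M {N : ℕ} {α : ℝ} (hα : -1 < α) {z : Fin N → ℝ} (hz : z ∈ WgeOpen N) :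
    (Matrix.of fun i j : Fin N =>
        (z j ^ (α + (i : ℕ) + 1) - lo z j ^ (α + (i : ℕ) + 1)) / (α + (i : ℕ) + 1)).det =
      (∏ k, z k ^ (α + 1)) * vdm z / poch (α + 1) N := by
  have hepos : ∀ i : Fin N, (0:ℝ) < α + (i : ℕ) + 1 := by
    intro i; have : (0:ℝ) ≤ (i:ℝ) := Nat.cast_nonneg _; linarith
  set G : Matrix (Fin N) (Fin N) ℝ :=
    Matrix.of fun i j : Fin N => z j ^ (α + (i : ℕ) + 1) / (α + (i : ℕ) + 1) with hG
  set L : Matrix (Fin N) (Fin N) ℝ :=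
    Matrix.of fun j k : Fin N => if j = k then (1:ℝ) else if (j:ℕ) + 1 = (k:ℕ) then -1 else 0
    with hL
  have hML : (Matrix.of fun i j : Fin N =>
      (z j ^ (α + (i : ℕ) + 1) - lo z j ^ (α + (i : ℕ) + 1)) / (α + (i : ℕ) + 1)) = G * L := by
    ext i k
    rw [Matrix.mul_apply]
    have hsplit : ∀ j : Fin N, G i j * L j k =
        (if j = k then G i j else 0) + (if (j:ℕ) + 1 = (k:ℕ) then -G i j else 0) := by
      intro j
      simp only [hL, Matrix.of_apply]
      by_cases h1 : j = k
      · subst h1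
        simp [show ¬((j:ℕ) + 1 = (j:ℕ)) by omega]
      · by_cases h2 : (j:ℕ) + 1 = (k:ℕ)
        · simp [h1, h2]
        · simp [h1, h2]
    rw [Finset.sum_congr rfl fun j _ => hsplit j, Finset.sum_add_distrib,
      Finset.sum_ite_eq' Finset.univ k (fun j => G i j), if_pos (Finset.mem_univ k)]
    by_cases hk : (k:ℕ) = 0
    · rw [Finset.sum_eq_zero fun j _ => if_neg (by omega)]
      have hlo : lo z k = 0 := by unfold lo; rw [dif_pos hk]
      simp only [Matrix.of_apply, hG, hlo, add_zero]
      rw [Real.zero_rpow (ne_of_gt (hepos i)), sub_zero]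
    · have hkN := k.isLt
      have hj : (⟨(k:ℕ) - 1, by omega⟩ : Fin N) ∈ Finset.univ := Finset.mem_univ _
      rw [Finset.sum_eq_single (⟨(k:ℕ) - 1, by omega⟩ : Fin N)
        (fun j _ hne => if_neg (fun hc => hne (Fin.ext (by simp at hc ⊢; omega))))
        (fun hc => absurd hj hc)]
      rw [if_pos (by simp; omega)]
      have hlo : lo z k = z ⟨(k:ℕ) - 1, by omega⟩ := by unfold lo; rw [dif_neg hk]
      simp only [Matrix.of_apply, hG, hlo]
      ring
  rw [hML, Matrix.det_mul]
  have hLdet : L.det = 1 := by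
    rw [Matrix.det_of_upperTriangular]
    · simp [hL]
    · intro j k hlt
      simp only [hL, Matrix.of_apply]
      rw [if_neg (by exact fun hc => absurd hc (by simp at hlt ⊢; omega)),
        if_neg (by simp at hlt; omega)]
  rw [hLdet, mul_one]
  set C : Matrix (Fin N) (Fin N) ℝ := (Matrix.vandermonde z).transpose with hC
  set B : Matrix (Fin N) (Fin N) ℝ :=
    Matrix.of fun i j : Fin N => z j ^ (α + 1) * C i j with hB
  have hGfac : G = Matrix.of fun i j : Fin N => (α + (i : ℕ) + 1)⁻¹ * B i j := by
    ext i j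
    simp only [hG, hB, hC, Matrix.of_apply, Matrix.transpose_apply, Matrix.vandermonde_apply]
    rw [← Real.rpow_natCast (z j) (i : ℕ), ← Real.rpow_add (hz.2 j), div_eq_inv_mul]
    ring_nf
  rw [hGfac, Matrix.det_mul_column, hB, Matrix.det_mul_row, hC, Matrix.det_transpose,
    ← vdm_eq_det]
  have hpoch : (∏ i : Fin N, (α + (i : ℕ) + 1)⁻¹) = (poch (α + 1) N)⁻¹ := by
    rw [Finset.prod_inv_distrib, poch]
    congr 1
    rw [Fin.prod_univ_eq_prod_range (fun k => (α + (k:ℕ) + 1))]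
    exact Finset.prod_congr rfl fun k _ => by ring
  rw [hpoch]
  field_simp

lemma h1d_lemma {N : ℕ} {α : ℝ} (hα : -1 < α) (z : Fin N → ℝ) :
    ∀ (n : ℕ) (i : Fin N),
      IntegrableOn (fun t : ℝ => t ^ (α + (n:ℝ))) (Set.Icc (lo z i) (z i)) := by
  intro n i
  rw [integrableOn_Icc_iff_integrableOn_Ioc]
  exact (intervalIntegral.intervalIntegrable_rpow'
    (by have : (0:ℝ) ≤ (n:ℝ) := Nat.cast_nonneg n; linarith)).1

lemma hterm_lemma {N : ℕ} {α : ℝ} (hα : -1 < α) (z : Fin N → ℝ) :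
    ∀ σ : Equiv.Perm (Fin N),
      Integrable (fun y : Fin N → ℝ =>
        ∏ i, (Set.Icc (lo z i) (z i)).indicator (fun t => t ^ (α + ((σ i : ℕ) : ℝ))) (y i)) :=
  fun σ => Integrable.fintype_prod fun i =>
    (integrable_indicator_iff measurableSet_Icc).2 (h1d_lemma hα z _ i)

lemma heq_lemma {N : ℕ} {α : ℝ} (hα : -1 < α) {z : Fin N → ℝ} (hz : z ∈ WgeOpen N) :
    (Set.univ.pi fun i : Fin N => Set.Icc (lo z i) (z i)).indicator
      (fun y => (∏ k, y k ^ α) * vdm y) =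
      fun y => ∑ σ : Equiv.Perm (Fin N), ((Equiv.Perm.sign σ : ℤ) : ℝ) *
        ∏ i, (Set.Icc (lo z i) (z i)).indicator (fun t => t ^ (α + ((σ i : ℕ) : ℝ))) (y i) := by
    funext y
    by_cases hy : y ∈ Set.univ.pi fun i : Fin N => Set.Icc (lo z i) (z i)
    · rw [Set.indicator_of_mem hy]
      have hynn : ∀ k, 0 ≤ y k := fun k => le_trans (lo_nonneg hz k) (hy k trivial).1
      have hind : ∀ (σ : Equiv.Perm (Fin N)) (i : Fin N),
          (Set.Icc (lo z i) (z i)).indicator (fun t => t ^ (α + ((σ i : ℕ) : ℝ))) (y i)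
            = y i ^ (α + ((σ i : ℕ) : ℝ)) :=
        fun σ i => Set.indicator_of_mem (hy i trivial) _
      simp only [hind]
      rw [vdm_eq_det, ← Matrix.det_transpose, Matrix.det_apply', Finset.mul_sum]
      refine Finset.sum_congr rfl fun σ _ => ?_
      simp only [Matrix.transpose_apply, Matrix.vandermonde_apply]
      have hre : ∀ i : Fin N, y i ^ (α + ((σ i : ℕ) : ℝ)) = y i ^ α * y i ^ ((σ i : ℕ)) :=
        fun i => (rpow_mul_pow (hynn i) hα _).symm
      simp only [hre, Finset.prod_mul_distrib]
      ring
    · rw [Set.indicator_of_notMem hy]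
      symm
      refine Finset.sum_eq_zero fun σ _ => ?_
      obtain ⟨i, hi⟩ : ∃ i, y i ∉ Set.Icc (lo z i) (z i) := by
        simp only [Set.mem_pi, Set.mem_univ, forall_true_left, not_forall] at hy
        obtain ⟨i, hi⟩ := hy
        exact ⟨i, by simpa using hi⟩
      rw [Finset.prod_eq_zero (Finset.mem_univ i) (Set.indicator_of_notMem hi _), mul_zero]

lemma key_integrableOn {N : ℕ} {α : ℝ} (hα : -1 < α) {z : Fin N → ℝ} (hz : z ∈ WgeOpen N) :
    IntegrableOn (fun y : Fin N → ℝ => (∏ k, y k ^ α) * vdm y) (interNN z) volume := by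
  have hmeas : MeasurableSet (Set.univ.pi fun i : Fin N => Set.Icc (lo z i) (z i)) :=
    MeasurableSet.univ_pi fun i => measurableSet_Icc
  rw [interNN_eq_pi hz]
  refine (integrable_indicator_iff hmeas).mp ?_
  rw [heq_lemma hα hz]
  exact integrable_finset_sum _ fun σ _ => ((hterm_lemma hα z σ).const_mul _)

lemma key_integral {N : ℕ} {α : ℝ} (hα : -1 < α) {z : Fin N → ℝ} (hz : z ∈ WgeOpen N) :
    (∫ y in interNN z, (∏ k, y k ^ α) * vdm y) =
      (∏ k, z k ^ (α + 1)) * vdm z / poch (α + 1) N := by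
  have hmeas : MeasurableSet (Set.univ.pi fun i : Fin N => Set.Icc (lo z i) (z i)) :=
    MeasurableSet.univ_pi fun i => measurableSet_Icc
  rw [interNN_eq_pi hz, ← MeasureTheory.integral_indicator hmeas]
  rw [heq_lemma hα hz,
    MeasureTheory.integral_finset_sum _ fun σ _ => ((hterm_lemma hα z σ).const_mul _)]
  have hval : ∀ (n : ℕ) (i : Fin N),
      (∫ x : ℝ, (Set.Icc (lo z i) (z i)).indicator (fun t => t ^ (α + (n:ℝ))) x) =
        (z i ^ (α + (n:ℝ) + 1) - lo z i ^ (α + (n:ℝ) + 1)) / (α + (n:ℝ) + 1) := by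
    intro n i
    rw [MeasureTheory.integral_indicator measurableSet_Icc,
      MeasureTheory.integral_Icc_eq_integral_Ioc,
      ← intervalIntegral.integral_of_le (lo_le hz i)]
    exact integral_rpow (Or.inl (by have : (0:ℝ) ≤ (n:ℝ) := Nat.cast_nonneg n; linarith))
  have hstep : ∀ σ : Equiv.Perm (Fin N),
      (∫ y : Fin N → ℝ, ((Equiv.Perm.sign σ : ℤ) : ℝ) *
          ∏ i, (Set.Icc (lo z i) (z i)).indicator (fun t => t ^ (α + ((σ i : ℕ) : ℝ))) (y i)) =
        ((Equiv.Perm.sign σ : ℤ) : ℝ) * ∏ i, (Matrix.of fun a b : Fin N =>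
          (z b ^ (α + (a : ℕ) + 1) - lo z b ^ (α + (a : ℕ) + 1)) / (α + (a : ℕ) + 1)) (σ i) i := by
    intro σ
    rw [MeasureTheory.integral_const_mul, MeasureTheory.volume_pi,
      MeasureTheory.integral_fintype_prod_eq_prod (ι := Fin N)
        (fun i t => (Set.Icc (lo z i) (z i)).indicator (fun u => u ^ (α + ((σ i : ℕ) : ℝ))) t)]
    congr 1
    refine Finset.prod_congr rfl fun i _ => ?_
    rw [hval (σ i) i]
    rfl
  simp only [hstep]
  rw [← Matrix.det_apply', det_M hα hz]

end Aux

/-- For `α > -1` and `z` in the open chamber, the integral of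
`(∏ y_k^α) Δ_N(y)` over the interlacing set equals `(∏ z_k^{α+1}) Δ_N(z) / (α+1)_N`;
consequently `Λ_{α,N}^N(z, ·)` is a probability measure on `W_≥^N`. -/
theorem stmt0 {N : ℕ} (hN : 1 ≤ N) (α : ℝ) (hα : -1 < α) (z : Fin N → ℝ)
    (hz : z ∈ WgeOpen N) :
    (∫ y in interNN z, (∏ k, y k ^ α) * vdm y) =
      (∏ k, z k ^ (α + 1)) * vdm z / poch (α + 1) N ∧
    IsProbabilityMeasure
      ((volume.restrict (Wge N)).withDensity fun y => ENNReal.ofReal (lamNNdens α z y)) := by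
  have hmeasInter : MeasurableSet (interNN z) := by
    rw [interNN_eq_pi hz]; exact MeasurableSet.univ_pi fun i => measurableSet_Icc
  refine ⟨key_integral hα hz, ?_⟩
  have hpoch := poch_pos hα N
  have hvz := vdm_pos hz
  have hprodz : (0:ℝ) < ∏ k, z k ^ (α + 1) :=
    Finset.prod_pos fun k _ => Real.rpow_pos_of_pos (hz.2 k) _
  set c : ℝ := poch (α + 1) N / ((∏ k, z k ^ (α + 1)) * vdm z) with hc
  set g : (Fin N → ℝ) → ℝ := fun y => c * ((∏ k, y k ^ α) * vdm y) with hg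
  have hof : ∀ y, ENNReal.ofReal (lamNNdens α z y) =
      (interNN z).indicator (fun y => ENNReal.ofReal (g y)) y := by
    intro y
    by_cases hy : y ∈ interNN z
    · rw [Set.indicator_of_mem hy]
      congr 1
      rw [lamNNdens, Set.indicator_of_mem hy, mul_one, hg, hc, Finset.prod_div_distrib]
      ring
    · rw [Set.indicator_of_notMem hy, lamNNdens, Set.indicator_of_notMem hy, mul_zero,
        ENNReal.ofReal_zero]
  constructor
  rw [withDensity_apply _ MeasurableSet.univ, MeasureTheory.setLIntegral_univ]
  simp only [hof]
  rw [lintegral_indicator hmeasInter, Measure.restrict_restrict hmeasInter,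
    Set.inter_eq_left.mpr (interNN_subset_Wge z)]
  have hnn : 0 ≤ᵐ[volume.restrict (interNN z)] g := by
    refine (ae_restrict_iff' hmeasInter).2 (Filter.Eventually.of_forall fun y hy => ?_)
    have h1 : (0:ℝ) ≤ ∏ k, y k ^ α :=
      Finset.prod_nonneg fun k _ => Real.rpow_nonneg (hy.1 k) _
    have h2 : (0:ℝ) ≤ vdm y := vdm_nonneg_of_mono (interNN_mono hy)
    have h3 : (0:ℝ) ≤ c := le_of_lt (by positivity)
    exact mul_nonneg h3 (mul_nonneg h1 h2)
  have hint : Integrable g (volume.restrict (interNN z)) :=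
    (key_integrableOn hα hz).const_mul c
  rw [← MeasureTheory.ofReal_integral_eq_lintegral_ofReal hint hnn]
  have : (∫ y in interNN z, g y) = 1 := by
    rw [hg]
    simp only
    rw [MeasureTheory.integral_const_mul, key_integral hα hz, hc]
    field_simp
  rw [this, ENNReal.ofReal_one]

end
end

section
/- Let α > −1 be a real number and N ≥ 1. For every x ∈ Ẇ_≥^{N+1} and every bounded Borel function f on W_≥^N, ∫_{W_≥^N} f(y) Λ_{α,N}^{N+1}(x,dy) = ∫_{W_N^{N+1}(x)} [ ∫_{W_≥^N} f(y) Λ_{α,N}^N(z,dy) ] Λ_N^{N+1}(x,dz); that is, Λ_{α,N}^{N+1}(x,·) = (Λ_N^{N+1} Λ_{α,N}^N)(x,·). -/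
open MeasureTheory Real

noncomputable section

namespace Stmt3Aux

variable {N : ℕ}

def aI (x : Fin (N + 1) → ℝ) (y : Fin N → ℝ) (i : Fin N) : ℝ := max (x i.castSucc) (y i)

def bI (x : Fin (N + 1) → ℝ) (y : Fin N → ℝ) (i : Fin N) : ℝ :=
  if h : (i : ℕ) + 1 < N then min (x i.succ) (y ⟨(i : ℕ) + 1, h⟩) else x i.succ

def JI (α : ℝ) (x : Fin (N + 1) → ℝ) (y : Fin N → ℝ) (i : Fin N) : ℝ :=
  ∫ z in Set.Ioc (aI x y i) (bI x y i), y i ^ α / z ^ (α + 1)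

def hfac (α : ℝ) (x : Fin (N + 1) → ℝ) (y : Fin N → ℝ) (i : Fin N) (t : ℝ) : ℝ :=
  Set.indicator (Set.Icc (aI x y i) (bI x y i)) (fun s => y i ^ α / s ^ (α + 1)) t

def Gfun (α : ℝ) (x : Fin (N + 1) → ℝ) (f : (Fin N → ℝ) → ℝ) (y z : Fin N → ℝ) : ℝ :=
  f y * ((N.factorial : ℝ) * poch (α + 1) N * (vdm y / vdm x)) * ∏ i, hfac α x y i (z i)

def Bset (x : Fin (N + 1) → ℝ) : Set (Fin N → ℝ) := ⋃ i : Fin N, {z | z i = x i.succ}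

lemma lamNp1factor_eq (α : ℝ) (x : Fin (N + 1) → ℝ) (y : Fin N → ℝ) (i : Fin N) :
    lamNp1factor α x y i =
      Set.indicator
        (Set.Icc (if (i : ℕ) = 0 then 0 else x ⟨(i : ℕ) - 1, by have := i.isLt; omega⟩)
          (x i.succ)) (fun _ => (1 : ℝ)) (y i) * JI α x y i := rfl

lemma JI_eq_zero_of_not_lt {α : ℝ} {x : Fin (N + 1) → ℝ} {y : Fin N → ℝ} {i : Fin N}
    (h : ¬ aI x y i < bI x y i) : JI α x y i = 0 := by
  rw [JI, Set.Ioc_eq_empty h]; simp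

lemma bI_le (x : Fin (N + 1) → ℝ) (y : Fin N → ℝ) (i : Fin N) : bI x y i ≤ x i.succ := by
  rw [bI]; split_ifs; exacts [min_le_left _ _, le_rfl]

lemma measurable_vdm {n : ℕ} : Measurable (vdm (N := n)) :=
  Finset.measurable_prod _ fun _ _ => (measurable_pi_apply _).sub (measurable_pi_apply _)

lemma poch_pos {a : ℝ} (ha : 0 < a) (n : ℕ) : 0 < poch a n :=
  Finset.prod_pos fun k _ => by positivity

lemma vdm_pos {n : ℕ} {y : Fin n → ℝ} (hy : ∀ i j : Fin n, i < j → y i < y j) : 0 < vdm y :=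
  Finset.prod_pos fun _ hp => sub_pos.2 (hy _ _ (Finset.mem_filter.1 hp).2)

lemma vdm_abs_le {y : Fin N → ℝ} {M : ℝ} (h : ∀ i, y i ∈ Set.Icc 0 M) :
    |vdm y| ≤ M ^ (Finset.univ.filter fun p : Fin N × Fin N => p.1 < p.2).card := by
  rw [vdm, Finset.abs_prod, ← Finset.prod_const]
  refine Finset.prod_le_prod (fun p _ => abs_nonneg _) fun p _ => ?_
  have h1 := h p.1; have h2 := h p.2
  rw [abs_sub_le_iff]
  constructor <;> simp only [Set.mem_Icc] at h1 h2 <;> linarith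

lemma measurableSet_Wge : MeasurableSet (Wge N) := by
  have : Wge N = (⋂ i, ⋂ j, ⋂ (_ : i ≤ j), {y : Fin N → ℝ | y i ≤ y j}) ∩
      ⋂ i, {y : Fin N → ℝ | 0 ≤ y i} := by
    ext y; simp [Wge, Set.mem_iInter]
  rw [this]
  exact (MeasurableSet.iInter fun i => MeasurableSet.iInter fun j =>
      MeasurableSet.iInter fun _ =>
        measurableSet_le (measurable_pi_apply i) (measurable_pi_apply j)).inter
    (MeasurableSet.iInter fun i => measurableSet_le measurable_const (measurable_pi_apply i))

lemma prod_lamNp1factor_eq (α : ℝ) {x : Fin (N + 1) → ℝ} {y : Fin N → ℝ} (hy : y ∈ Wge N) :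
    ∏ i, lamNp1factor α x y i = ∏ i, JI α x y i := by
  by_cases hz : ∀ i, JI α x y i ≠ 0
  · refine Finset.prod_congr rfl fun i _ => ?_
    have hab : ∀ j : Fin N, aI x y j < bI x y j := by
      intro j; by_contra h; exact hz j (JI_eq_zero_of_not_lt h)
    rw [lamNp1factor_eq, Set.indicator_of_mem, one_mul]
    refine Set.mem_Icc.2 ⟨?_, ?_⟩
    · split_ifs with h0
      · exact hy.2 i
      · set j : Fin N := ⟨(i : ℕ) - 1, by have := i.isLt; omega⟩ with hj
        have hjN : (j : ℕ) + 1 < N := by simp [hj]; have := i.isLt; omega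
        have h2 := hab j
        rw [bI, dif_pos hjN] at h2
        have hidx : (⟨(j : ℕ) + 1, hjN⟩ : Fin N) = i := by
          apply Fin.ext; simp [hj]; omega
        rw [hidx] at h2
        have hcs : x j.castSucc = x ⟨(i : ℕ) - 1, by have := i.isLt; omega⟩ := by
          congr 1
        calc x ⟨(i : ℕ) - 1, by have := i.isLt; omega⟩ = x j.castSucc := hcs.symm
          _ ≤ aI x y j := le_max_left _ _
          _ ≤ y i := le_of_lt (lt_of_lt_of_le h2 (min_le_right _ _))
    · exact le_of_lt (lt_of_lt_of_le (lt_of_le_of_lt (le_max_right _ _) (hab i)) (bI_le x y i))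
  · push_neg at hz
    obtain ⟨i, hi⟩ := hz
    rw [Finset.prod_eq_zero (Finset.mem_univ i) (by rw [lamNp1factor_eq, hi, mul_zero]),
      Finset.prod_eq_zero (Finset.mem_univ i) hi]

lemma integral_hfac (α : ℝ) (x : Fin (N + 1) → ℝ) (y : Fin N → ℝ) (i : Fin N) :
    ∫ t, hfac α x y i t = JI α x y i := by
  rw [show (fun t => hfac α x y i t) = Set.indicator (Set.Icc (aI x y i) (bI x y i))
      (fun s => y i ^ α / s ^ (α + 1)) from rfl,
    MeasureTheory.integral_indicator measurableSet_Icc,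
    MeasureTheory.integral_Icc_eq_integral_Ioc, JI]

lemma integral_prod_hfac (α : ℝ) (x : Fin (N + 1) → ℝ) (y : Fin N → ℝ) :
    ∫ z : Fin N → ℝ, ∏ i, hfac α x y i (z i) = ∏ i, JI α x y i := by
  rw [MeasureTheory.integral_fintype_prod_volume_eq_prod (ι := Fin N) (fun i t => hfac α x y i t)]
  exact Finset.prod_congr rfl fun i _ => integral_hfac α x y i

lemma bset_null (x : Fin (N + 1) → ℝ) : volume (Bset x : Set (Fin N → ℝ)) = 0 := by
  refine measure_iUnion_null fun i => ?_
  rw [volume_pi]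
  exact Measure.pi_hyperplane _ i _

lemma section_eq (α : ℝ) {x : Fin (N + 1) → ℝ} (hx : x ∈ WgeOpen (N + 1))
    (f : (Fin N → ℝ) → ℝ) {z : Fin N → ℝ} (hzB : z ∉ Bset x) {y : Fin N → ℝ}
    (hy : y ∈ Wge N) :
    f y * lamNNdens α z y * lamGTdens x z = Gfun α x f y z := by
  have hxle : ∀ i j : Fin (N + 1), i ≤ j → x i ≤ x j := fun i j hij =>
    hij.lt_or_eq.elim (fun h => (hx.1 i j h).le) fun h => by rw [h]
  have hvx : vdm x ≠ 0 := ne_of_gt (vdm_pos hx.1)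
  by_cases hzG : z ∈ interGT x
  · have hvz : vdm z ≠ 0 := by
      intro h
      obtain ⟨p, hp, hp0⟩ := Finset.prod_eq_zero_iff.1 h
      have hplt := (Finset.mem_filter.1 hp).2
      have heq : z p.1 = z p.2 := by have := sub_eq_zero.1 hp0; linarith
      apply hzB
      refine Set.mem_iUnion.2 ⟨p.1, ?_⟩
      have h1 : z p.1 ≤ x p.1.succ := (hzG p.1).2
      have h2 : x p.1.succ ≤ x p.2.castSucc := hxle _ _ (by
        simp only [Fin.lt_def] at hplt
        simp only [Fin.le_def, Fin.val_succ, Fin.coe_castSucc]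
        omega)
      have h3 : x p.2.castSucc ≤ z p.2 := (hzG p.2).1
      show z p.1 = x p.1.succ
      linarith
    by_cases hyz : y ∈ interNN z
    · have hfe : ∀ i, hfac α x y i (z i) = y i ^ α / z i ^ (α + 1) := by
        intro i
        rw [hfac, Set.indicator_of_mem]
        refine Set.mem_Icc.2 ⟨max_le (hzG i).1 (hyz.2.1 i), ?_⟩
        rw [bI]; split_ifs with h
        · exact le_min (hzG i).2 (hyz.2.2 i h)
        · exact (hzG i).2
      rw [Gfun]
      simp only [hfe]
      rw [lamNNdens, lamGTdens, Set.indicator_of_mem hyz, Set.indicator_of_mem hzG,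
        mul_one, mul_one]
      have key : vdm y / vdm z * (vdm z / vdm x) = vdm y / vdm x := by
        field_simp
      calc f y * (poch (α + 1) N * (∏ k, y k ^ α / z k ^ (α + 1)) * (vdm y / vdm z)) *
          ((N.factorial : ℝ) * (vdm z / vdm x))
          = f y * ((N.factorial : ℝ) * poch (α + 1) N * (vdm y / vdm z * (vdm z / vdm x))) *
            (∏ k, y k ^ α / z k ^ (α + 1)) := by ring
        _ = _ := by rw [key]
    · rw [lamNNdens, Set.indicator_of_notMem hyz]
      simp only [mul_zero, zero_mul]
      have h0 : ∀ i, 0 ≤ y i := hy.2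
      have hbad : ∃ i : Fin N, ¬ y i ≤ z i ∨
          ∃ h : (i : ℕ) + 1 < N, ¬ z i ≤ y ⟨(i : ℕ) + 1, h⟩ := by
        by_contra hcon
        push_neg at hcon
        exact hyz ⟨h0, fun i => (hcon i).1, fun i h => (hcon i).2 h⟩
      obtain ⟨i, hi⟩ := hbad
      have hz0 : hfac α x y i (z i) = 0 := by
        rw [hfac, Set.indicator_of_notMem]
        rcases hi with hi | ⟨h, hi⟩
        · exact fun hm => hi (le_trans (le_max_right _ _) hm.1)
        · refine fun hm => hi ?_
          have := hm.2
          rw [bI, dif_pos h] at this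
          exact le_trans this (min_le_right _ _)
      rw [Gfun, Finset.prod_eq_zero (Finset.mem_univ i) hz0, mul_zero]
  · rw [lamGTdens, Set.indicator_of_notMem hzG, mul_zero, mul_zero]
    have hbad : ∃ i : Fin N, ¬ (x i.castSucc ≤ z i ∧ z i ≤ x i.succ) := by
      by_contra hcon; push_neg at hcon
      exact hzG fun i => hcon i
    obtain ⟨i, hi⟩ := hbad
    have hz0 : hfac α x y i (z i) = 0 := by
      rw [hfac, Set.indicator_of_notMem]
      intro hm
      exact hi ⟨le_trans (le_max_left _ _) hm.1, le_trans hm.2 (by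
        rw [bI]; split_ifs; exacts [min_le_left _ _, le_rfl])⟩
    rw [Gfun, Finset.prod_eq_zero (Finset.mem_univ i) hz0, mul_zero]

lemma measurable_G (α : ℝ) (x : Fin (N + 1) → ℝ) (f : (Fin N → ℝ) → ℝ)
    (hfm : Measurable f) :
    Measurable fun p : (Fin N → ℝ) × (Fin N → ℝ) => Gfun α x f p.2 p.1 := by
  refine Measurable.mul (Measurable.mul (hfm.comp measurable_snd) ?_) ?_
  · exact measurable_const.mul (((measurable_vdm.comp measurable_snd)).div measurable_const)
  · refine Finset.measurable_prod _ fun i _ => ?_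
    have heq : (fun p : (Fin N → ℝ) × (Fin N → ℝ) => hfac α x p.2 i (p.1 i)) = fun p =>
        if aI x p.2 i ≤ p.1 i ∧ p.1 i ≤ bI x p.2 i
          then p.2 i ^ α / p.1 i ^ (α + 1) else 0 := by
      funext p
      simp only [hfac, Set.indicator_apply, Set.mem_Icc]
    rw [heq]
    have hmb : Measurable fun p : (Fin N → ℝ) × (Fin N → ℝ) => bI x p.2 i := by
      unfold bI; split
      · exact measurable_const.min ((measurable_pi_apply _).comp measurable_snd)
      · exact measurable_const
    have hma : Measurable fun p : (Fin N → ℝ) × (Fin N → ℝ) => aI x p.2 i :=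
      measurable_const.max ((measurable_pi_apply _).comp measurable_snd)
    have hm1 : Measurable fun p : (Fin N → ℝ) × (Fin N → ℝ) => p.1 i :=
      (measurable_pi_apply _).comp measurable_fst
    have hset : MeasurableSet {p : (Fin N → ℝ) × (Fin N → ℝ) |
        aI x p.2 i ≤ p.1 i ∧ p.1 i ≤ bI x p.2 i} := by
      rw [Set.setOf_and]
      exact (measurableSet_le hma hm1).inter (measurableSet_le hm1 hmb)
    refine Measurable.ite hset ?_ measurable_const
    fun_prop

lemma integrable_G {α : ℝ} (hα : -1 < α) {x : Fin (N + 1) → ℝ}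
    (hx : x ∈ WgeOpen (N + 1)) (f : (Fin N → ℝ) → ℝ) (hfm : Measurable f)
    (C : ℝ) (hfb : ∀ y, |f y| ≤ C) :
    Integrable (fun p : (Fin N → ℝ) × (Fin N → ℝ) => Gfun α x f p.2 p.1)
      (volume.prod (volume.restrict (Wge N))) := by
  have hxle : ∀ i j : Fin (N + 1), i ≤ j → x i ≤ x j := fun i j hij =>
    hij.lt_or_eq.elim (fun h => (hx.1 i j h).le) fun h => by rw [h]
  have hvx : 0 < vdm x := vdm_pos hx.1
  have hpoch : 0 < poch (α + 1) N := poch_pos (by linarith) N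
  have hC : 0 ≤ C := le_trans (abs_nonneg _) (hfb fun _ => 0)
  set M : ℝ := x (Fin.last N) with hM
  have hM0 : 0 < M := hx.2 _
  have hx00 : 0 < x 0 := hx.2 0
  set c0 : ℝ := (x 0 ^ (α + 1))⁻¹ with hc0
  have hc0p : 0 < c0 := inv_pos.2 (rpow_pos_of_pos hx00 _)
  set Mv : ℝ := M ^ (Finset.univ.filter fun p : Fin N × Fin N => p.1 < p.2).card with hMv
  have hMvp : 0 ≤ Mv := pow_nonneg hM0.le _
  set K : ℝ := C * N.factorial * poch (α + 1) N * Mv / vdm x * c0 ^ N with hK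
  have hK0 : 0 ≤ K := by
    refine mul_nonneg (div_nonneg ?_ hvx.le) (pow_nonneg hc0p.le _)
    exact mul_nonneg (mul_nonneg (mul_nonneg hC (Nat.cast_nonneg _)) hpoch.le) hMvp
  set φ : ℝ → ℝ := Set.indicator (Set.Icc (0:ℝ) M) (fun t => t ^ α) with hφdef
  set ψ : ℝ → ℝ := Set.indicator (Set.Icc (0:ℝ) M) (fun _ => (1:ℝ)) with hψdef
  have hφ0 : ∀ t, 0 ≤ φ t := fun t => Set.indicator_nonneg (fun s hs => rpow_nonneg hs.1 _) t
  have hψ0 : ∀ t, 0 ≤ ψ t := fun t => Set.indicator_nonneg (fun s _ => zero_le_one) t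
  have hφint : Integrable φ := by
    rw [hφdef, integrable_indicator_iff measurableSet_Icc]
    rw [integrableOn_Icc_iff_integrableOn_Ioc]
    exact (intervalIntegrable_iff_integrableOn_Ioc_of_le hM0.le).1
      (intervalIntegral.intervalIntegrable_rpow' hα)
  have hψint : Integrable ψ := by
    rw [hψdef, integrable_indicator_iff measurableSet_Icc]
    exact integrableOn_const measure_Icc_lt_top.ne
  have h1 : Integrable (fun z : Fin N → ℝ => K * ∏ i, ψ (z i)) :=
    (Integrable.fintype_prod (f := fun _ : Fin N => ψ) fun _ => hψint).const_mul K
  have h2 : Integrable (fun y : Fin N → ℝ => ∏ i, φ (y i)) :=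
    Integrable.fintype_prod (f := fun _ : Fin N => φ) fun _ => hφint
  have hprodmeas : volume.prod (volume.restrict (Wge N)) =
      ((volume : Measure (Fin N → ℝ)).prod (volume : Measure (Fin N → ℝ))).restrict
        (Set.univ ×ˢ Wge N) := by
    nth_rewrite 1 [show (volume : Measure (Fin N → ℝ)) = volume.restrict Set.univ from
      Measure.restrict_univ.symm]
    rw [Measure.prod_restrict]
  have hD : Integrable (fun p : (Fin N → ℝ) × (Fin N → ℝ) =>
      (K * ∏ i, ψ (p.1 i)) * ∏ i, φ (p.2 i)) (volume.prod (volume.restrict (Wge N))) := by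
    rw [hprodmeas]
    exact (h1.mul_prod h2).restrict
  refine hD.mono' ((measurable_G α x f hfm).aestronglyMeasurable) ?_
  rw [hprodmeas]
  refine ae_restrict_of_forall_mem (MeasurableSet.univ.prod measurableSet_Wge) ?_
  rintro ⟨z, y⟩ hp
  have hy : y ∈ Wge N := hp.2
  have hDnn : 0 ≤ (K * ∏ i, ψ (z i)) * ∏ i, φ (y i) :=
    mul_nonneg (mul_nonneg hK0 (Finset.prod_nonneg fun i _ => hψ0 _))
      (Finset.prod_nonneg fun i _ => hφ0 _)
  show ‖Gfun α x f y z‖ ≤ (K * ∏ i, ψ (z i)) * ∏ i, φ (y i)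
  rw [Gfun]
  by_cases hall : ∀ i, z i ∈ Set.Icc (aI x y i) (bI x y i)
  · have hfe : ∀ i, hfac α x y i (z i) = y i ^ α / z i ^ (α + 1) := fun i =>
      Set.indicator_of_mem (hall i) _
    have hz0 : ∀ i, 0 < z i := fun i =>
      lt_of_lt_of_le (hx.2 _) (le_trans (le_max_left _ _) (hall i).1)
    have hyM : ∀ i, y i ∈ Set.Icc 0 M := by
      intro i
      refine ⟨hy.2 i, ?_⟩
      have h1 : y i ≤ z i := le_trans (le_max_right _ _) (hall i).1
      have h2 : z i ≤ x i.succ := le_trans (hall i).2 (bI_le x y i)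
      exact le_trans h1 (le_trans h2 (hxle _ _ (Fin.le_last _)))
    have hzM : ∀ i, z i ∈ Set.Icc 0 M := fun i =>
      ⟨(hz0 i).le, le_trans (le_trans (hall i).2 (bI_le x y i)) (hxle _ _ (Fin.le_last _))⟩
    have hψ1 : ∀ i, ψ (z i) = 1 := fun i => Set.indicator_of_mem (hzM i) _
    have hφy : ∀ i, φ (y i) = y i ^ α := fun i => Set.indicator_of_mem (hyM i) _
    have hPnn : 0 ≤ ∏ i, y i ^ α / z i ^ (α + 1) :=
      Finset.prod_nonneg fun i _ => div_nonneg (rpow_nonneg (hy.2 i) _)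
        (rpow_nonneg (hz0 i).le _)
    have hPle : (∏ i, y i ^ α / z i ^ (α + 1)) ≤ (∏ i, y i ^ α) * c0 ^ N := by
      have hb : ∀ i ∈ Finset.univ, y i ^ α / z i ^ (α + 1) ≤ y i ^ α * c0 := by
        intro i _
        rw [div_eq_mul_inv]
        refine mul_le_mul_of_nonneg_left ?_ (rpow_nonneg (hy.2 i) _)
        rw [hc0]
        refine inv_anti₀ (rpow_pos_of_pos hx00 _) ?_
        exact rpow_le_rpow hx00.le
          (le_trans (hxle 0 _ (Fin.zero_le _)) (le_trans (le_max_left _ _) (hall i).1))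
          (by linarith)
      calc (∏ i, y i ^ α / z i ^ (α + 1)) ≤ ∏ i, (y i ^ α * c0) :=
            Finset.prod_le_prod (fun i _ => div_nonneg (rpow_nonneg (hy.2 i) _)
              (rpow_nonneg (hz0 i).le _)) hb
        _ = (∏ i, y i ^ α) * c0 ^ N := by
            rw [Finset.prod_mul_distrib, Finset.prod_const, Finset.card_univ, Fintype.card_fin]
    have hcb : |(N.factorial : ℝ) * poch (α + 1) N * (vdm y / vdm x)| ≤
        (N.factorial : ℝ) * poch (α + 1) N * (Mv / vdm x) := by
      rw [abs_mul, abs_mul, abs_div, abs_of_nonneg (Nat.cast_nonneg _), abs_of_pos hpoch,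
        abs_of_pos hvx]
      refine mul_le_mul_of_nonneg_left ?_ (by positivity)
      exact (div_le_div_iff_of_pos_right hvx).2 (vdm_abs_le hyM)
    calc ‖f y * ((N.factorial : ℝ) * poch (α + 1) N * (vdm y / vdm x)) *
          ∏ i, hfac α x y i (z i)‖
        = |f y| * |(N.factorial : ℝ) * poch (α + 1) N * (vdm y / vdm x)| *
          (∏ i, y i ^ α / z i ^ (α + 1)) := by
          rw [show (∏ i, hfac α x y i (z i)) = ∏ i, y i ^ α / z i ^ (α + 1) from
            Finset.prod_congr rfl fun i _ => hfe i]
          rw [Real.norm_eq_abs, abs_mul, abs_mul, abs_of_nonneg hPnn]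
      _ ≤ C * ((N.factorial : ℝ) * poch (α + 1) N * (Mv / vdm x)) *
          ((∏ i, y i ^ α) * c0 ^ N) := by
          refine mul_le_mul (mul_le_mul (hfb y) hcb (abs_nonneg _) hC) hPle hPnn ?_
          positivity
      _ = (K * ∏ i, ψ (z i)) * ∏ i, φ (y i) := by
          simp only [hψ1, hφy, Finset.prod_const, one_pow]
          rw [hK]
          field_simp
  · push_neg at hall
    obtain ⟨i, hi⟩ := hall
    have h0 : hfac α x y i (z i) = 0 := Set.indicator_of_notMem hi _
    rw [Finset.prod_eq_zero (Finset.mem_univ i) h0, mul_zero, norm_zero]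
    exact hDnn

end Stmt3Aux


/-- For `α > -1`, `x ∈ Ẇ_≥^{N+1}` and bounded Borel `f`,
`Λ_{α,N}^{N+1}(x,·) = (Λ_N^{N+1} Λ_{α,N}^N)(x,·)`. -/
theorem stmt3 {N : ℕ} (hN : 1 ≤ N) (α : ℝ) (hα : -1 < α) (x : Fin (N + 1) → ℝ)
    (hx : x ∈ WgeOpen (N + 1)) (f : (Fin N → ℝ) → ℝ) (hfm : Measurable f)
    (C : ℝ) (hfb : ∀ y, |f y| ≤ C) :
    (∫ y in Wge N, f y * lamNp1dens α x y) =
      ∫ z, (∫ y in Wge N, f y * lamNNdens α z y) * lamGTdens x z := by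
  classical
  open Stmt3Aux in
  have hB : volume (Bset x : Set (Fin N → ℝ)) = 0 := bset_null x
  have hae : ∀ᵐ z : Fin N → ℝ, (∫ y in Wge N, f y * lamNNdens α z y) * lamGTdens x z
      = ∫ y in Wge N, Gfun α x f y z := by
    refine ae_iff.2 (measure_mono_null ?_ hB)
    intro z hz
    simp only [Set.mem_setOf_eq] at hz
    by_contra hzB
    apply hz
    rw [← MeasureTheory.integral_mul_const]
    exact setIntegral_congr_fun measurableSet_Wge fun y hy => section_eq α hx f hzB hy
  have hfin : ∀ y ∈ Wge N, (∫ z, Gfun α x f y z) = f y * lamNp1dens α x y := by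
    intro y hy
    have h1 : (fun z : Fin N → ℝ => Gfun α x f y z) = fun z =>
        (f y * ((N.factorial : ℝ) * poch (α + 1) N * (vdm y / vdm x))) *
          ∏ i, hfac α x y i (z i) := rfl
    rw [h1, MeasureTheory.integral_const_mul, integral_prod_hfac α x y,
      ← prod_lamNp1factor_eq α hy, lamNp1dens]
    ring
  calc (∫ y in Wge N, f y * lamNp1dens α x y)
      = ∫ y in Wge N, ∫ z, Gfun α x f y z :=
        setIntegral_congr_fun measurableSet_Wge fun y hy => (hfin y hy).symm
    _ = ∫ z, ∫ y in Wge N, Gfun α x f y z :=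
        (MeasureTheory.integral_integral_swap (integrable_G hα hx f hfm C hfb)).symm
    _ = ∫ z, (∫ y in Wge N, f y * lamNNdens α z y) * lamGTdens x z :=
        (integral_congr_ae hae).symm


end
end

section
/- Let N ≥ 1 and α ∈ ℝ. For every x = (x_1,…,x_N) ∈ ℝ^N, the Vandermonde determinant Δ_N satisfies ∑_{i=1}^N [ x_i (∂²Δ_N/∂x_i²)(x) + (−x_i + 1 + α) (∂Δ_N/∂x_i)(x) ] = −(N(N−1)/2) Δ_N(x); that is, Δ_N is an eigenfunction of the operator ∑_{i=1}^N L_{α,x_i} with eigenvalue −N(N−1)/2. -/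
/-!
Write `Δ_N(x) = det (x_i ^ k)_{i,k}`. The operator `L_{α,x_i}` only touches row `i`, and the
determinant is linear in that row, so `L_{α,x_i} Δ_N` is the determinant with row `i` replaced by
`(L_α t^k)(x_i)`. Since `L_α t^k = k(k+α) t^(k-1) - k t^k`, that row is row `i` of `V A` for the
Vandermonde matrix `V` and the triangular matrix `A` of `L_α` on polynomials of degree `< N`.
Jacobi's formula `∑ᵢ det (V with row i replaced by row i of V A) = det V · tr A` then gives the
eigenvalue `tr A = -∑_{k<N} k = -N(N-1)/2`.
-/

open MeasureTheory Real

noncomputable section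

namespace Matrix

variable {n R : Type*} [Fintype n] [DecidableEq n] [CommRing R]

theorem det_updateRow_eq_sum (M : Matrix n n R) (i : n) (b : n → R) :
    (M.updateRow i b).det = ∑ k, Mᵀ.adjugate i k * b k := by
  rw [← cramer_transpose_apply, cramer_eq_adjugate_mulVec, mulVec, dotProduct]

theorem sum_det_updateRow_mul (M A : Matrix n n R) :
    ∑ i, (M.updateRow i ((M * A) i)).det = M.det * A.trace := by
  calc ∑ i, (M.updateRow i ((M * A) i)).det
      = (Mᵀ.adjugate * (M * A)ᵀ).trace := by
        simp only [det_updateRow_eq_sum, trace, diag, mul_apply, transpose_apply]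
    _ = (Mᵀ * Mᵀ.adjugate * Aᵀ).trace := by
        rw [transpose_mul, ← Matrix.mul_assoc, trace_mul_cycle]
    _ = M.det * A.trace := by
        rw [mul_adjugate, det_transpose, smul_mul, one_mul, trace_smul, trace_transpose,
          smul_eq_mul]

end Matrix

open Matrix

theorem deriv_sum_mul_pow {ι : Type*} (s : Finset ι) (c : ι → ℝ) (e : ι → ℕ) :
    deriv (fun t => ∑ k ∈ s, c k * t ^ e k) = fun t => ∑ k ∈ s, c k * e k * t ^ (e k - 1) := by
  funext t
  refine (HasDerivAt.fun_sum fun k _ => ?_).deriv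
  simpa [mul_assoc] using (hasDerivAt_pow (e k) t).const_mul (c k)

theorem vdm_eq_det_vandermonde {N : ℕ} (x : Fin N → ℝ) : vdm x = (vandermonde x).det := by
  rw [det_vandermonde, vdm, Finset.prod_filter, Fintype.prod_prod_type]
  simp [Finset.prod_ite, Finset.filter_lt_eq_Ioi]

theorem vandermonde_update {N : ℕ} (x : Fin N → ℝ) (i : Fin N) (t : ℝ) :
    vandermonde (Function.update x i t) = (vandermonde x).updateRow i fun k => t ^ (k : ℕ) := by
  ext j k
  rcases eq_or_ne j i with rfl | hj <;> simp [updateRow_apply, *]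

/-- Column `k` holds the coefficients of `L_α t^k = k(k+α) t^(k-1) - k t^k`. -/
def laguerreMatrix (N : ℕ) (α : ℝ) : Matrix (Fin N) (Fin N) ℝ :=
  of fun l k => if (l : ℕ) = k then -(k : ℝ) else if (l : ℕ) + 1 = k then (k : ℝ) * (k + α) else 0

theorem vandermonde_mul_laguerreMatrix_apply {N : ℕ} (α : ℝ) (x : Fin N → ℝ) (i k : Fin N) :
    (vandermonde x * laguerreMatrix N α) i k =
      x i * ((k : ℕ) * ((k - 1 : ℕ) : ℝ) * x i ^ ((k : ℕ) - 1 - 1)) +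
        (-x i + 1 + α) * ((k : ℕ) * x i ^ ((k : ℕ) - 1)) := by
  obtain ⟨k, hk⟩ := k
  simp only [mul_apply, vandermonde_apply, laguerreMatrix, of_apply]
  rw [Fin.sum_univ_eq_sum_range (fun l => x i ^ l *
    if l = k then -(k : ℝ) else if l + 1 = k then (k : ℝ) * (k + α) else 0)]
  rcases k with _ | m
  · simp
  · rw [Finset.sum_eq_add (m + 1) m (by omega)]
    · rw [if_pos rfl, if_neg (by omega), if_pos rfl, Nat.add_sub_cancel]
      rcases m with _ | j
      · simp only [zero_add, pow_zero, pow_one, Nat.cast_zero, Nat.cast_one]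
        ring
      · rw [Nat.add_sub_cancel]
        push_cast
        ring
    · intro l _ hl
      simp [hl.1, hl.2]
    · exact fun h => absurd (Finset.mem_range.2 hk) h
    · exact fun h => absurd (Finset.mem_range.2 (by omega)) h

theorem trace_laguerreMatrix (N : ℕ) (α : ℝ) :
    (laguerreMatrix N α).trace = -((N : ℝ) * ((N : ℝ) - 1) / 2) := by
  simp only [trace, diag, laguerreMatrix, of_apply, if_true, Finset.sum_neg_distrib]
  rw [Fin.sum_univ_eq_sum_range (fun k => (k : ℝ)), neg_inj, eq_div_iff two_ne_zero]
  rcases N with _ | n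
  · simp
  · have gauss : ((∑ k ∈ Finset.range (n + 1), k : ℕ) : ℝ) * 2 = ((n + 1) * n : ℕ) := by
      exact_mod_cast Finset.sum_range_id_mul_two (n + 1)
    rw [← Nat.cast_sum, gauss]
    push_cast
    ring

theorem laguerre_vdm_eq_det_updateRow {N : ℕ} (α : ℝ) (x : Fin N → ℝ) (i : Fin N) :
    x i * deriv (deriv fun t => vdm (Function.update x i t)) (x i) +
        (-(x i) + 1 + α) * deriv (fun t => vdm (Function.update x i t)) (x i) =
      ((vandermonde x).updateRow i ((vandermonde x * laguerreMatrix N α) i)).det := by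
  have row_expansion : (fun t => vdm (Function.update x i t)) =
      fun t => ∑ k, (vandermonde x)ᵀ.adjugate i k * t ^ (k : ℕ) := by
    funext t
    rw [vdm_eq_det_vandermonde, vandermonde_update, det_updateRow_eq_sum]
  rw [row_expansion, deriv_sum_mul_pow, deriv_sum_mul_pow, det_updateRow_eq_sum, Finset.mul_sum,
    Finset.mul_sum, ← Finset.sum_add_distrib]
  refine Finset.sum_congr rfl fun k _ => ?_
  rw [vandermonde_mul_laguerreMatrix_apply]
  ring

theorem stmt7_general {N : ℕ} (α : ℝ) (x : Fin N → ℝ) :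
    (∑ i : Fin N,
        (x i * deriv (deriv fun t => vdm (Function.update x i t)) (x i) +
          (-(x i) + 1 + α) * deriv (fun t => vdm (Function.update x i t)) (x i))) =
      -((N : ℝ) * ((N : ℝ) - 1) / 2) * vdm x := by
  rw [Finset.sum_congr rfl fun i _ => laguerre_vdm_eq_det_updateRow α x i, sum_det_updateRow_mul,
    trace_laguerreMatrix, vdm_eq_det_vandermonde, mul_comm]

/-- The Vandermonde determinant is an eigenfunction of
`∑ᵢ L_{α,xᵢ}`, where `L_{α,x} = x ∂²/∂x² + (-x+1+α) ∂/∂x`, with eigenvalue `-N(N-1)/2`. -/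
theorem stmt7 {N : ℕ} (hN : 1 ≤ N) (α : ℝ) (x : Fin N → ℝ) :
    (∑ i : Fin N,
        (x i * deriv (deriv fun t => vdm (Function.update x i t)) (x i) +
          (-(x i) + 1 + α) * deriv (fun t => vdm (Function.update x i t)) (x i))) =
      -((N : ℝ) * ((N : ℝ) - 1) / 2) * vdm x :=
  stmt7_general α x

end
end

section
/- Let α ∈ ℝ and let f : (0,∞) → ℝ be twice differentiable. Set m̂_α(x) = e^x x^{−α−1} and g(x) = m̂_α(x)^{−1} f(x) = e^{−x} x^{α+1} f(x). Then for every x > 0, m̂_α(x) · [ x g''(x) + (x − α) g'(x) ] = −f(x) + x f''(x) + (−x + 2 + α) f'(x); that is, m̂_α ∘ L̂_α ∘ m̂_α^{−1} = −1 + L_{α+1}, where L̂_α = x d²/dx² + (x − α) d/dx is the Siegmund dual of L_α and L_{α+1} = x d²/dx² + (−x + 1 + (α+1)) d/dx. -/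
/-!
Write the conjugated function as `w f` with `w = m̂_α⁻¹`. The logarithmic derivatives of `w` are
rational in `x`: `w'/w = (α+1)/x - 1` and `w''/w = ((α+1)/x - 1)² - (α+1)/x²`. Expanding
`L̂_α (w f)` by the Leibniz rule and dividing by `w` leaves a second-order operator in `f` with
rational coefficients, which collect to `-f + L_{α+1} f`.
-/

open Real Filter Topology

theorem deriv_deriv_mul {u v : ℝ → ℝ} {x : ℝ}
    (hu : ∀ᶠ y in 𝓝 x, DifferentiableAt ℝ u y) (hv : ∀ᶠ y in 𝓝 x, DifferentiableAt ℝ v y)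
    (hu' : DifferentiableAt ℝ (deriv u) x) (hv' : DifferentiableAt ℝ (deriv v) x) :
    deriv (deriv fun t => u t * v t) x =
      deriv (deriv u) x * v x + 2 * deriv u x * deriv v x + u x * deriv (deriv v) x := by
  have hderiv : deriv (fun t => u t * v t) =ᶠ[𝓝 x] fun t => deriv u t * v t + u t * deriv v t :=
    (hu.and hv).mono fun y hy => deriv_mul hy.1 hy.2
  rw [hderiv.deriv_eq]
  exact ((hu'.hasDerivAt.mul hv.self_of_nhds.hasDerivAt).add
    (hu.self_of_nhds.hasDerivAt.mul hv'.hasDerivAt)).deriv.trans (by ring)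

/-- The inverse `m̂_α⁻¹` of the speed density of `L̂_α`. -/
noncomputable def laguerreWeight (α t : ℝ) : ℝ := exp (-t) * t ^ (α + 1)

theorem exp_mul_rpow_mul_laguerreWeight (α : ℝ) {x : ℝ} (hx : 0 < x) :
    exp x * x ^ (-α - 1) * laguerreWeight α x = 1 := by
  rw [laguerreWeight, show -α - 1 = -(α + 1) by ring, rpow_neg hx.le, exp_neg]
  have : x ^ (α + 1) ≠ 0 := (rpow_pos_of_pos hx _).ne'
  field_simp

theorem hasDerivAt_laguerreWeight (α : ℝ) {x : ℝ} (hx : 0 < x) :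
    HasDerivAt (laguerreWeight α) (laguerreWeight α x * ((α + 1) / x - 1)) x := by
  have h := (hasDerivAt_neg x).exp.mul (hasDerivAt_rpow_const (p := α + 1) (Or.inl hx.ne'))
  refine h.congr_deriv ?_
  rw [laguerreWeight, show α + 1 - 1 = α by ring, rpow_add_one hx.ne']
  field_simp
  ring

theorem hasDerivAt_deriv_laguerreWeight (α : ℝ) {x : ℝ} (hx : 0 < x) :
    HasDerivAt (deriv (laguerreWeight α))
      (laguerreWeight α x * (((α + 1) / x - 1) ^ 2 - (α + 1) / x ^ 2)) x := by
  have hderiv : deriv (laguerreWeight α) =ᶠ[𝓝 x] fun t => laguerreWeight α t * ((α + 1) / t - 1) :=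
    eventually_of_mem (Ioi_mem_nhds hx) fun y hy => (hasDerivAt_laguerreWeight α hy).deriv
  have h := (hasDerivAt_laguerreWeight α hx).mul
    (((hasDerivAt_inv hx.ne').const_mul (α + 1)).sub_const 1)
  refine (h.congr_of_eventuallyEq hderiv).congr_deriv ?_
  field_simp
  ring

/-- The h-transform identity `m̂_α ∘ L̂_α ∘ m̂_α⁻¹ = -1 + L_{α+1}`,
where `L̂_α = x d²/dx² + (x-α) d/dx`, `m̂_α(x) = eˣ x^{-α-1}` and
`L_{α+1} = x d²/dx² + (-x+2+α) d/dx`. -/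
theorem stmt8 (α : ℝ) (f : ℝ → ℝ)
    (hf1 : ∀ x ∈ Set.Ioi (0 : ℝ), DifferentiableAt ℝ f x)
    (hf2 : ∀ x ∈ Set.Ioi (0 : ℝ), DifferentiableAt ℝ (deriv f) x) :
    ∀ x ∈ Set.Ioi (0 : ℝ),
      (Real.exp x * x ^ (-α - 1)) *
        (x * deriv (deriv fun t => Real.exp (-t) * t ^ (α + 1) * f t) x +
          (x - α) * deriv (fun t => Real.exp (-t) * t ^ (α + 1) * f t) x) =
      -f x + x * deriv (deriv f) x + (-x + 2 + α) * deriv f x := by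
  intro x hx
  have hw := hasDerivAt_laguerreWeight α hx
  have hw' := hasDerivAt_deriv_laguerreWeight α hx
  have hf : ∀ᶠ y in 𝓝 x, DifferentiableAt ℝ f y := eventually_of_mem (Ioi_mem_nhds hx) hf1
  have hg' : deriv (fun t => laguerreWeight α t * f t) x =
      laguerreWeight α x * ((α + 1) / x - 1) * f x + laguerreWeight α x * deriv f x :=
    (hw.mul (hf1 x hx).hasDerivAt).deriv
  have hg'' := deriv_deriv_mul (eventually_of_mem (Ioi_mem_nhds hx) fun y hy =>
    (hasDerivAt_laguerreWeight α hy).differentiableAt) hf hw'.differentiableAt (hf2 x hx)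
  change exp x * x ^ (-α - 1) * (x * deriv (deriv fun t => laguerreWeight α t * f t) x +
    (x - α) * deriv (fun t => laguerreWeight α t * f t) x) = _
  rw [hg', hg'', hw.deriv, hw'.deriv,
    eq_inv_of_mul_eq_one_right (exp_mul_rpow_mul_laguerreWeight α hx)]
  have hm : exp x * x ^ (-α - 1) ≠ 0 := mul_ne_zero (exp_ne_zero x) (rpow_pos_of_pos hx _).ne'
  have hx0 : x ≠ 0 := hx.ne'
  generalize exp x * x ^ (-α - 1) = m at hm ⊢
  field_simp
  ring
end
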